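/- arXiv:0908.4579 — 5 statements merged into one kernel-verified Lean document; each statement's English description precedes it below -/
import Mathlib

section
/- Let Δ = P + R ⊂ ℝˡ be the Minkowski sum of a compact polytope P and a strictly convex closed polyhedral cone R with vertex at the origin. Let q(y) = 1 + α·y be an affine function that is strictly positive on Δ and such that α·v > 0 for every nonzero v ∈ R. Then the image of Δ under the map y ↦ y/q(y) is bounded. -/
/-!
On `P` the denominator `q = 1 + α·y` is bounded below by some `ε > 0` (compactness), while on the
cone `R` the functional `α` grows at least linearly, `α·r ≥ c‖r‖`, because it has a positive minimum
`c` on the compact set `R ∩ {‖v‖ = 1}`. Hence for `y = p + r` we get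
`‖y‖ / q(y) ≤ ‖p‖ / q(y) + ‖r‖ / q(y) ≤ ‖p‖ / ε + 1 / c`.
-/

open scoped RealInnerProductSpace Pointwise

section Coercive

variable {E : Type*} [NormedAddCommGroup E] [NormedSpace ℝ E]

theorem exists_pos_mul_norm_le_of_cone [ProperSpace E] (f : E →L[ℝ] ℝ) {R : Set E}
    (hRclosed : IsClosed R) (hRcone : ∀ c : ℝ, 0 < c → ∀ v ∈ R, c • v ∈ R)
    (hf : ∀ v ∈ R, v ≠ 0 → 0 < f v) :
    ∃ c : ℝ, 0 < c ∧ ∀ r ∈ R, c * ‖r‖ ≤ f r := by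
  have hS : IsCompact (R ∩ Metric.sphere 0 1) :=
    (isCompact_sphere 0 1).of_isClosed_subset (hRclosed.inter Metric.isClosed_sphere)
      Set.inter_subset_right
  obtain ⟨c, hc, hcS⟩ := hS.exists_forall_le' f.continuous.continuousOn
    fun v hv => hf v hv.1 (ne_zero_of_mem_unit_sphere ⟨v, hv.2⟩)
  refine ⟨c, hc, fun r hr => ?_⟩
  rcases eq_or_ne r 0 with rfl | hr0
  · simp
  have hrn : 0 < ‖r‖ := norm_pos_iff.2 hr0
  have hunit : ‖r‖⁻¹ • r ∈ R ∩ Metric.sphere 0 1 :=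
    ⟨hRcone _ (inv_pos.2 hrn) r hr, by simp [norm_smul, hrn.ne']⟩
  have := hcS _ hunit
  rw [map_smul, smul_eq_mul, le_inv_mul_iff₀ hrn] at this
  linarith

theorem isBounded_image_inv_smul_add (f : E →L[ℝ] ℝ) {P R : Set E} (hP : Bornology.IsBounded P)
    {ε c : ℝ} (hε : 0 < ε) (hc : 0 < c) (hPf : ∀ p ∈ P, ε ≤ 1 + f p)
    (hRf : ∀ r ∈ R, c * ‖r‖ ≤ f r) :
    Bornology.IsBounded ((fun y => (1 + f y)⁻¹ • y) '' (P + R)) := by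
  obtain ⟨M, hM⟩ := hP.exists_norm_le
  refine isBounded_iff_forall_norm_le.2 ⟨M / ε + 1 / c, ?_⟩
  rintro _ ⟨_, ⟨p, hp, r, hr, rfl⟩, rfl⟩
  have hq : ε + c * ‖r‖ ≤ 1 + f (p + r) := by
    rw [map_add]; linarith [hPf p hp, hRf r hr]
  have hqpos : 0 < 1 + f (p + r) := by linarith [mul_nonneg hc.le (norm_nonneg r)]
  calc ‖(1 + f (p + r))⁻¹ • (p + r)‖ = ‖p + r‖ / (1 + f (p + r)) := by
        rw [norm_smul, Real.norm_of_nonneg (inv_pos.2 hqpos).le, inv_mul_eq_div]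
    _ ≤ ‖p‖ / (1 + f (p + r)) + ‖r‖ / (1 + f (p + r)) := by
        rw [← add_div]; gcongr; exact norm_add_le p r
    _ ≤ M / ε + 1 / c := by
        gcongr ?_ + ?_
        · exact div_le_div₀ ((norm_nonneg p).trans (hM p hp)) (hM p hp) hε
            (by linarith [mul_nonneg hc.le (norm_nonneg r)])
        · rw [div_le_div_iff₀ hqpos hc]; linarith

end Coercive

theorem image_of_polyhedron_bounded_general (l : ℕ)
    (P R : Set (EuclideanSpace ℝ (Fin l))) (α : EuclideanSpace ℝ (Fin l))
    (hPcpt : IsCompact P)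
    (hRclosed : IsClosed R)
    (hRcone : ∀ (c : ℝ), 0 ≤ c → ∀ v ∈ R, c • v ∈ R)
    (hqpos : ∀ y ∈ P + R, 0 < 1 + ⟪α, y⟫)
    (hαpos : ∀ v ∈ R, v ≠ 0 → 0 < ⟪α, v⟫) :
    Bornology.IsBounded ((fun y => (1 + ⟪α, y⟫)⁻¹ • y) '' (P + R)) := by
  rcases R.eq_empty_or_nonempty with rfl | ⟨v, hv⟩
  · simp
  have h0R : (0 : EuclideanSpace ℝ (Fin l)) ∈ R := by simpa using hRcone 0 le_rfl v hv
  obtain ⟨ε, hε, hεP⟩ := hPcpt.exists_forall_le'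
    (continuous_const.add (continuous_const.inner continuous_id)).continuousOn
    fun p hp => by simpa using hqpos _ (Set.add_mem_add hp h0R)
  obtain ⟨c, hc, hcR⟩ := exists_pos_mul_norm_le_of_cone (innerSL ℝ α) hRclosed
    (fun c hc => hRcone c hc.le) (by simpa using hαpos)
  simpa using isBounded_image_inv_smul_add (innerSL ℝ α) hPcpt.isBounded hε hc
    (by simpa using hεP) (by simpa using hcR)

/-- If `Δ = P + R` with `P` a compact convex polytope and `R` a closed strictly
convex (no lines) polyhedral cone with vertex the origin, and `q(y) = 1 + α·y`
is strictly positive on `Δ` with `α·v > 0` for every nonzero `v ∈ R`, then the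
image of `Δ` under `y ↦ y/q(y)` is bounded. -/
theorem image_of_polyhedron_bounded (l : ℕ)
    (P R : Set (EuclideanSpace ℝ (Fin l))) (α : EuclideanSpace ℝ (Fin l))
    (hPcpt : IsCompact P) (hPconv : Convex ℝ P) (hPne : P.Nonempty)
    (hRclosed : IsClosed R) (hRconv : Convex ℝ R)
    (hRcone : ∀ (c : ℝ), 0 ≤ c → ∀ v ∈ R, c • v ∈ R)
    (hRnoline : ∀ v ∈ R, -v ∈ R → v = 0)
    (hqpos : ∀ y ∈ P + R, 0 < 1 + ⟪α, y⟫)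
    (hαpos : ∀ v ∈ R, v ≠ 0 → 0 < ⟪α, v⟫) :
    Bornology.IsBounded ((fun y => (1 + ⟪α, y⟫)⁻¹ • y) '' (P + R)) :=
  image_of_polyhedron_bounded_general l P R α hPcpt hRclosed hRcone hqpos hαpos
end

section
/- With q(y) = 1 + α·y, P compact, q > 0 on P, and R a polyhedral cone with α·v ≥ ‖v‖/ρ for all v ∈ R (for some ρ > 0), the image point ȳ = y/q(y) of any y = y_P + y_R ∈ P + R satisfies ‖ȳ‖ ≤ π + ρ, where π is an upper bound for ‖z‖/q(z) over z ∈ P. -/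
open scoped RealInnerProductSpace

theorem norm_inv_add_smul_add_le {E : Type*} [SeminormedAddCommGroup E] [NormedSpace ℝ E]
    {p r : E} {a b π ρ : ℝ} (ha : 0 < a) (hb : 0 ≤ b) (hπ : 0 ≤ π) (hρ : 0 ≤ ρ)
    (hp : ‖p‖ ≤ π * a) (hr : ‖r‖ ≤ ρ * b) :
    ‖(a + b)⁻¹ • (p + r)‖ ≤ π + ρ := by
  have hab : 0 < a + b := by positivity
  rw [norm_smul, norm_inv, Real.norm_of_nonneg hab.le, inv_mul_le_iff₀ hab]
  calc ‖p + r‖ ≤ ‖p‖ + ‖r‖ := norm_add_le p r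
    _ ≤ π * a + ρ * b := add_le_add hp hr
    _ ≤ (a + b) * (π + ρ) := by nlinarith

theorem image_point_norm_bound_general (l : ℕ)
    (P R : Set (EuclideanSpace ℝ (Fin l))) (α : EuclideanSpace ℝ (Fin l))
    (π ρ : ℝ) (hρ : 0 < ρ)
    (hqP : ∀ z ∈ P, 0 < 1 + ⟪α, z⟫)
    (hπ : ∀ z ∈ P, ‖z‖ / (1 + ⟪α, z⟫) ≤ π)
    (hR : ∀ v ∈ R, ‖v‖ / ρ ≤ ⟪α, v⟫)
    (yP yR : EuclideanSpace ℝ (Fin l)) (hyP : yP ∈ P) (hyR : yR ∈ R) :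
    ‖(1 + ⟪α, yP + yR⟫)⁻¹ • (yP + yR)‖ ≤ π + ρ := by
  have hq := hqP yP hyP
  have hπ₀ : 0 ≤ π := (div_nonneg (norm_nonneg yP) hq.le).trans (hπ yP hyP)
  have hyR' : ‖yR‖ ≤ ρ * ⟪α, yR⟫ := (div_le_iff₀' hρ).1 (hR yR hyR)
  have hαyR : 0 ≤ ⟪α, yR⟫ := (div_nonneg (norm_nonneg yR) hρ.le).trans (hR yR hyR)
  rw [inner_add_right, ← add_assoc]
  exact norm_inv_add_smul_add_le hq hαyR hπ₀ hρ.le ((div_le_iff₀ hq).1 (hπ yP hyP)) hyR'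

/-- Norm estimate for the projective image: if `y = y_P + y_R` with `y_P ∈ P`
compact where `q > 0` and `‖z‖/q(z) ≤ π` on `P`, and `α·v ≥ ‖v‖/ρ` on the cone
`R`, then `‖y/q(y)‖ ≤ π + ρ`. -/
theorem image_point_norm_bound (l : ℕ)
    (P R : Set (EuclideanSpace ℝ (Fin l))) (α : EuclideanSpace ℝ (Fin l))
    (π ρ : ℝ) (hρ : 0 < ρ)
    (hPcpt : IsCompact P)
    (hqP : ∀ z ∈ P, 0 < 1 + ⟪α, z⟫)
    (hπ : ∀ z ∈ P, ‖z‖ / (1 + ⟪α, z⟫) ≤ π)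
    (hR : ∀ v ∈ R, ‖v‖ / ρ ≤ ⟪α, v⟫)
    (yP yR : EuclideanSpace ℝ (Fin l)) (hyP : yP ∈ P) (hyR : yR ∈ R) :
    ‖(1 + ⟪α, yP + yR⟫)⁻¹ • (yP + yR)‖ ≤ π + ρ :=
  image_point_norm_bound_general l P R α π ρ hρ hqP hπ hR yP yR hyP hyR
end

section
/- Suppose f₁,…,f_{l−1}, g are differentiable functions on a domain Δ ⊂ ℝˡ whose common zero locus is finite and such that C = {f₁ = ⋯ = f_{l−1} = 0} is a smooth curve. Then no compact connected component (oval) of C can contain a zero of g unless the Jacobian determinant J = Jac(f₁,…,f_{l−1},g) also vanishes somewhere on that component. Precisely: if an oval of C contains a point with g = 0 and g has only simple zeroes on C, then J vanishes at some point of that oval. -/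
/-!
If the Jacobian `J` did not vanish on the oval, then at every point the differentials of
`f₁, …, f_{l-1}, g` would be linearly independent. The velocity of the oval is a nonzero vector
killed by every `dfᵢ`, so `dg` cannot kill it: `g` would have nonvanishing derivative along the
periodic parametrization. But a continuous periodic function attains its maximum, where its derivative
vanishes (the Rolle step of Khovanskii–Rolle).
-/

open Set

namespace Function.Periodic

theorem exists_isMaxOn {f : ℝ → ℝ} {c : ℝ} (hp : Periodic f c) (hc : c ≠ 0)
    (hf : Continuous f) : ∃ t, IsMaxOn f univ t := by
  obtain ⟨_, ⟨t, rfl⟩, ht⟩ :=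
    (hp.compact_of_continuous hc hf).exists_isGreatest (range_nonempty f)
  exact ⟨t, fun s _ => ht ⟨s, rfl⟩⟩

theorem exists_deriv_eq_zero {f : ℝ → ℝ} {c : ℝ} (hp : Periodic f c) (hc : c ≠ 0)
    (hf : Continuous f) : ∃ t, deriv f t = 0 := by
  obtain ⟨t, ht⟩ := hp.exists_isMaxOn hc hf
  exact ⟨t, (ht.isLocalMax Filter.univ_mem).deriv_eq_zero⟩

end Function.Periodic

section Jacobian

open Matrix

variable {ι : Type*} [Fintype ι] [DecidableEq ι]

noncomputable def jacobianMatrix (F : ι → EuclideanSpace ℝ ι → ℝ) (x : EuclideanSpace ℝ ι) :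
    Matrix ι ι ℝ :=
  Matrix.of fun i j => fderiv ℝ (F i) x (EuclideanSpace.single j 1)

theorem jacobianMatrix_mulVec (F : ι → EuclideanSpace ℝ ι → ℝ) (x v : EuclideanSpace ℝ ι) :
    jacobianMatrix F x *ᵥ v = fun i => fderiv ℝ (F i) x v := by
  ext i
  conv_rhs => rw [← (EuclideanSpace.basisFun ι ℝ).sum_repr v]
  simp [jacobianMatrix, mulVec, dotProduct, mul_comm]

theorem exists_fderiv_apply_ne_zero_of_det_jacobianMatrix_ne_zero
    {F : ι → EuclideanSpace ℝ ι → ℝ} {x v : EuclideanSpace ℝ ι}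
    (hJ : (jacobianMatrix F x).det ≠ 0) (hv : v ≠ 0) : ∃ i, fderiv ℝ (F i) x v ≠ 0 := by
  by_contra! h
  refine hv (WithLp.ofLp_injective _ (eq_zero_of_mulVec_eq_zero hJ ?_))
  rw [jacobianMatrix_mulVec]
  exact funext h

end Jacobian

theorem fderiv_apply_deriv_eq_zero_of_forall_comp_eq_zero {E : Type*} [NormedAddCommGroup E]
    [NormedSpace ℝ E] {f : E → ℝ} {γ : ℝ → E} {t : ℝ} (hf : DifferentiableAt ℝ f (γ t))
    (hγ : DifferentiableAt ℝ γ t) (h : ∀ s, f (γ s) = 0) : fderiv ℝ f (γ t) (deriv γ t) = 0 := by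
  rw [← fderiv_comp_deriv t hf hγ, show f ∘ γ = fun _ => 0 from funext h, deriv_const]

theorem deriv_comp_ne_zero_of_det_jacobianMatrix_snoc_ne_zero {n : ℕ}
    {fs : Fin n → EuclideanSpace ℝ (Fin (n + 1)) → ℝ} {g : EuclideanSpace ℝ (Fin (n + 1)) → ℝ}
    {γ : ℝ → EuclideanSpace ℝ (Fin (n + 1))} {t : ℝ}
    (hfs : ∀ i, DifferentiableAt ℝ (fs i) (γ t)) (hg : DifferentiableAt ℝ g (γ t))
    (hγ : DifferentiableAt ℝ γ t) (hreg : deriv γ t ≠ 0) (honC : ∀ s i, fs i (γ s) = 0)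
    (hJ : (jacobianMatrix (Fin.snoc fs g) (γ t)).det ≠ 0) : deriv (g ∘ γ) t ≠ 0 := by
  obtain ⟨i, hi⟩ := exists_fderiv_apply_ne_zero_of_det_jacobianMatrix_ne_zero hJ hreg
  rw [fderiv_comp_deriv t hg hγ]
  induction i using Fin.lastCases with
  | last => simpa using hi
  | cast k =>
    simp only [Fin.snoc_castSucc] at hi
    exact absurd (fderiv_apply_deriv_eq_zero_of_forall_comp_eq_zero (hfs k) hγ (honC · k)) hi

theorem no_zero_on_oval_without_jacobian_zero_general (n : ℕ)
    (fs : Fin n → EuclideanSpace ℝ (Fin (n + 1)) → ℝ)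
    (g : EuclideanSpace ℝ (Fin (n + 1)) → ℝ)
    (hfs : ∀ i, ContDiff ℝ 1 (fs i)) (hg : ContDiff ℝ 1 g)
    (γ : ℝ → EuclideanSpace ℝ (Fin (n + 1)))
    (hγ : ContDiff ℝ 1 γ) (hper : Function.Periodic γ 1)
    (hreg : ∀ t, deriv γ t ≠ 0)
    (honC : ∀ t, ∀ i, fs i (γ t) = 0) :
    ∃ t, Matrix.det (Matrix.of fun i j : Fin (n + 1) =>
        fderiv ℝ ((Fin.snoc fs g : Fin (n + 1) → EuclideanSpace ℝ (Fin (n + 1)) → ℝ) i) (γ t) (EuclideanSpace.single j 1)) = 0 := by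
  by_contra! hJ
  obtain ⟨t, ht⟩ := (hper.comp g).exists_deriv_eq_zero one_ne_zero (hg.continuous.comp hγ.continuous)
  exact deriv_comp_ne_zero_of_det_jacobianMatrix_snoc_ne_zero
    (fun i => (hfs i).differentiable one_ne_zero _) (hg.differentiable one_ne_zero _)
    (hγ.differentiable one_ne_zero _) (hreg t) honC (hJ t) ht

/-- No oval (compact connected component, parametrized by a periodic regular
`C¹` curve) of the curve `C = {f₁ = ⋯ = f_{l-1} = 0}` can contain a zero of
`g` unless the Jacobian determinant `J = Jac(f₁,…,f_{l-1},g)` vanishes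
somewhere on that oval, provided `g` has only simple zeroes along the oval. -/
theorem no_zero_on_oval_without_jacobian_zero (n : ℕ)
    (fs : Fin n → EuclideanSpace ℝ (Fin (n + 1)) → ℝ)
    (g : EuclideanSpace ℝ (Fin (n + 1)) → ℝ)
    (hfs : ∀ i, ContDiff ℝ 1 (fs i)) (hg : ContDiff ℝ 1 g)
    (γ : ℝ → EuclideanSpace ℝ (Fin (n + 1)))
    (hγ : ContDiff ℝ 1 γ) (hper : Function.Periodic γ 1)
    (hreg : ∀ t, deriv γ t ≠ 0)
    (honC : ∀ t, ∀ i, fs i (γ t) = 0)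
    (hsmooth : ∀ t, LinearIndependent ℝ (fun i => fderiv ℝ (fs i) (γ t)))
    (hsimple : ∀ t, g (γ t) = 0 → deriv (g ∘ γ) t ≠ 0)
    (hzero : ∃ t, g (γ t) = 0) :
    ∃ t, Matrix.det (Matrix.of fun i j : Fin (n + 1) =>
        fderiv ℝ ((Fin.snoc fs g : Fin (n + 1) → EuclideanSpace ℝ (Fin (n + 1)) → ℝ) i) (γ t) (EuclideanSpace.single j 1)) = 0 :=
  no_zero_on_oval_without_jacobian_zero_general n fs g hfs hg γ hγ hper hreg honC
end

section
/- With s_0 ≤ 2^{C(l,2)} n^l and t_j ≤ 2^{C(l−j,2)} n^{l−j} · C(l+n+1, j) (binomial coefficient), the total 2 s_0 + Σ_{j=1}^{l} (l+1−j) t_j is bounded above by l · ((e² + 3)/2) · 2^{C(l,2)} · n^l. -/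
/-!
Write `A = 2^C(l-1,2) nˡ`, so that `2^C(l,2) nˡ = 2^(l-1) A`. Using `C(l+n+1, j) ≤ n^j C(l+2, j)`,
the `j`-th weighted term is at most `(l+1-j) C(l+2,j) 2^C(l-j,2) A`, and this coefficient is
non-increasing in `j`, so every term is bounded by its value `l(l+2) A` at `j = 1`. Hence the total
is at most `(2·2^(l-1) + l²(l+2)) A ≤ 5l·2^(l-1) A`, and `5 ≤ (e²+3)/2` because `e² ≥ 7`.
-/

open Finset

theorem Nat.choose_add_le_succ_pow_mul_choose {m j : ℕ} (r : ℕ) (h : j ≤ m) :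
    (m + r).choose j ≤ (r + 1) ^ j * m.choose j := by
  induction j with
  | zero => simp
  | succ j ih =>
    have hfactor : m + r - j ≤ (r + 1) * (m - j) := by
      obtain ⟨d, rfl⟩ : ∃ d, m = j + d + 1 := ⟨m - j - 1, by omega⟩
      rw [show j + d + 1 + r - j = d + 1 + r by omega, show j + d + 1 - j = d + 1 by omega]
      nlinarith
    refine Nat.le_of_mul_le_mul_right ?_ j.succ_pos
    calc (m + r).choose (j + 1) * (j + 1) = (m + r).choose j * (m + r - j) :=
          Nat.choose_succ_right_eq _ _
      _ ≤ (r + 1) ^ j * m.choose j * ((r + 1) * (m - j)) := by gcongr; exact ih (by omega)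
      _ = (r + 1) ^ (j + 1) * (m.choose (j + 1) * (j + 1)) := by
          rw [Nat.choose_succ_right_eq]; ring
      _ = (r + 1) ^ (j + 1) * m.choose (j + 1) * (j + 1) := by ring

theorem Real.seven_le_exp_two : 7 ≤ Real.exp 2 := by
  have h := Real.sum_le_exp_of_nonneg zero_le_two 5
  norm_num [Finset.sum_range_succ, Nat.factorial] at h
  linarith

/-- With `l = i + d + 1` and `j = i + 1`: the coefficient `(l + 1 - j) C(l + 2, j) 2^C(l - j, 2)`
is at most its value `l (l + 2) 2^C(l - 1, 2)` at `j = 1`. -/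
theorem succ_mul_choose_mul_two_pow_choose_two_le (i d : ℕ) :
    (d + 1) * (i + d + 3).choose (i + 1) * 2 ^ d.choose 2 ≤
      (i + d + 1) * (i + d + 3) * 2 ^ (i + d).choose 2 := by
  induction i with
  | zero => simp only [zero_add, Nat.choose_one_right, le_refl]
  | succ i ih =>
    rw [show i + 1 + d = i + d + 1 by ring]
    set m := i + d
    have hchoose : (m + 4).choose (i + 2) * (i + 2) = (m + 3).choose (i + 1) * (m + 4) := by
      rw [← Nat.add_one_mul_choose_eq]; ring
    have htwo_pow : 2 ^ (m + 1).choose 2 = 2 ^ m * 2 ^ m.choose 2 := by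
      rw [Nat.choose_succ_succ', Nat.choose_one_right, pow_add]
    -- from `i` to `i + 1` the left side grows by `(m + 4) / (i + 2)`, the right side by
    -- `(m + 2) (m + 4) 2^m / ((m + 1) (m + 3))`
    have hcoef : (m + 1) * (m + 3) ≤ (m + 2) * (i + 2) * 2 ^ m := by
      have : m + 2 ≤ 2 * 2 ^ m := by rw [← pow_succ']; exact Nat.lt_two_pow_self
      calc (m + 1) * (m + 3) ≤ (m + 2) * (m + 2) := by nlinarith
        _ ≤ (m + 2) * (2 * 2 ^ m) := by gcongr
        _ ≤ (m + 2) * (i + 2) * 2 ^ m := by rw [mul_assoc]; gcongr; omega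
    refine Nat.le_of_mul_le_mul_right ?_ (i + 1).succ_pos
    calc (d + 1) * (m + 1 + 3).choose (i + 1 + 1) * 2 ^ d.choose 2 * (i + 1 + 1)
        = (d + 1) * 2 ^ d.choose 2 * ((m + 4).choose (i + 2) * (i + 2)) := by ring
      _ = (d + 1) * (m + 3).choose (i + 1) * 2 ^ d.choose 2 * (m + 4) := by rw [hchoose]; ring
      _ ≤ (m + 1) * (m + 3) * 2 ^ m.choose 2 * (m + 4) := by gcongr
      _ ≤ (m + 2) * (i + 2) * 2 ^ m * 2 ^ m.choose 2 * (m + 4) := by gcongr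
      _ = (m + 1 + 1) * (m + 1 + 3) * 2 ^ (m + 1).choose 2 * (i + 1 + 1) := by
          rw [htwo_pow]; ring

theorem two_mul_two_pow_add_sq_mul_le {l : ℕ} (hl : 0 < l) :
    2 * 2 ^ (l - 1) + l ^ 2 * (l + 2) ≤ 5 * l * 2 ^ (l - 1) := by
  obtain ⟨k, rfl⟩ : ∃ k, l = k + 1 := ⟨l - 1, by omega⟩
  rw [Nat.add_sub_cancel]
  clear hl
  induction k with
  | zero => norm_num
  | succ k ih =>
    have := Nat.lt_two_pow_self (n := k)
    rw [pow_succ]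
    nlinarith

theorem path_term_le {l n j : ℕ} (hn : 0 < n) (hj : 1 ≤ j) (hjl : j ≤ l) :
    (l + 1 - j) * (2 ^ (l - j).choose 2 * n ^ (l - j) * (l + n + 1).choose j) ≤
      l * (l + 2) * (2 ^ (l - 1).choose 2 * n ^ l) := by
  obtain ⟨i, rfl⟩ : ∃ i, j = i + 1 := ⟨j - 1, by omega⟩
  obtain ⟨d, rfl⟩ : ∃ d, l = i + d + 1 := ⟨l - i - 1, by omega⟩
  have hchoose :
      (i + d + 1 + n + 1).choose (i + 1) ≤ n ^ (i + 1) * (i + d + 3).choose (i + 1) := by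
    have := Nat.choose_add_le_succ_pow_mul_choose (m := i + d + 3) (j := i + 1) (n - 1) (by omega)
    rwa [Nat.sub_add_cancel hn, show i + d + 3 + (n - 1) = i + d + 1 + n + 1 by omega] at this
  rw [show i + d + 1 + 1 - (i + 1) = d + 1 by omega, show i + d + 1 - (i + 1) = d by omega,
    Nat.add_sub_cancel]
  calc (d + 1) * (2 ^ d.choose 2 * n ^ d * (i + d + 1 + n + 1).choose (i + 1))
      ≤ (d + 1) * (2 ^ d.choose 2 * n ^ d * (n ^ (i + 1) * (i + d + 3).choose (i + 1))) := by
        gcongr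
    _ = (d + 1) * (i + d + 3).choose (i + 1) * 2 ^ d.choose 2 * n ^ (i + d + 1) := by ring
    _ ≤ (i + d + 1) * (i + d + 3) * 2 ^ (i + d).choose 2 * n ^ (i + d + 1) := by
        exact Nat.mul_le_mul_right _ (succ_mul_choose_mul_two_pow_choose_two_le i d)
    _ = (i + d + 1) * (i + d + 1 + 2) * (2 ^ (i + d).choose 2 * n ^ (i + d + 1)) := by ring

theorem fewnomial_path_bound_general (l n : ℕ) (hl : 0 < l) (hn : 0 < n)
    (s0 : ℝ) (t : ℕ → ℝ)
    (hs0 : s0 ≤ 2 ^ (l.choose 2) * (n : ℝ) ^ l)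
    (ht : ∀ j ∈ Finset.Icc 1 l,
      t j ≤ 2 ^ ((l - j).choose 2) * (n : ℝ) ^ (l - j) * ((l + n + 1).choose j)) :
    2 * s0 + ∑ j ∈ Finset.Icc 1 l, ((l : ℝ) + 1 - j) * t j ≤
      (l : ℝ) * ((Real.exp 2 + 3) / 2) * 2 ^ (l.choose 2) * (n : ℝ) ^ l := by
  set A : ℝ := 2 ^ (l - 1).choose 2 * (n : ℝ) ^ l
  have hsplit : (2 : ℝ) ^ l.choose 2 = 2 ^ (l - 1) * 2 ^ (l - 1).choose 2 := by
    obtain ⟨k, rfl⟩ : ∃ k, l = k + 1 := ⟨l - 1, by omega⟩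
    rw [Nat.add_sub_cancel, Nat.choose_succ_succ', Nat.choose_one_right, pow_add]
  have hs0' : s0 ≤ 2 ^ (l - 1) * A := by rwa [hsplit, mul_assoc] at hs0
  have hterm : ∀ j ∈ Icc 1 l, ((l : ℝ) + 1 - j) * t j ≤ l * (l + 2) * A := by
    intro j hj
    obtain ⟨hj1, hjl⟩ := mem_Icc.mp hj
    have hcoef : (l : ℝ) + 1 - j = ((l + 1 - j : ℕ) : ℝ) := by
      rw [Nat.cast_sub (by omega)]; push_cast; ring
    calc ((l : ℝ) + 1 - j) * t j
        ≤ ((l + 1 - j : ℕ) : ℝ) *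
            (2 ^ (l - j).choose 2 * (n : ℝ) ^ (l - j) * (l + n + 1).choose j) := by
          rw [hcoef]; gcongr; exact ht j hj
      _ ≤ l * (l + 2) * A := by simp only [A]; exact_mod_cast path_term_le hn hj1 hjl
  have hsum : ∑ j ∈ Icc 1 l, ((l : ℝ) + 1 - j) * t j ≤ l * (l * (l + 2) * A) := by
    simpa using Finset.sum_le_card_nsmul _ _ _ hterm
  have hnum : (2 * 2 ^ (l - 1) + l ^ 2 * (l + 2) : ℝ) ≤ 5 * l * 2 ^ (l - 1) := by
    exact_mod_cast two_mul_two_pow_add_sq_mul_le hl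
  have hexp : (5 : ℝ) ≤ (Real.exp 2 + 3) / 2 := by linarith [Real.seven_le_exp_two]
  calc 2 * s0 + ∑ j ∈ Icc 1 l, ((l : ℝ) + 1 - j) * t j
      ≤ (2 * 2 ^ (l - 1) + l ^ 2 * (l + 2)) * A := by linear_combination 2 * hs0' + hsum
    _ ≤ 5 * l * 2 ^ (l - 1) * A := by gcongr
    _ ≤ l * ((Real.exp 2 + 3) / 2) * 2 ^ (l - 1) * A := by
        rw [mul_comm 5 (l : ℝ)]; gcongr
    _ = l * ((Real.exp 2 + 3) / 2) * 2 ^ l.choose 2 * (n : ℝ) ^ l := by rw [hsplit]; ring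

/-- With `s₀ ≤ 2^C(l,2) nˡ` and `t_j ≤ 2^C(l-j,2) n^{l-j} C(l+n+1,j)`, the
total `2 s₀ + Σ_j (l+1-j) t_j` is at most `l·((e²+3)/2)·2^C(l,2)·nˡ`. -/
theorem fewnomial_path_bound (l n : ℕ) (hl : 0 < l) (hn : 0 < n)
    (s0 : ℝ) (t : ℕ → ℝ) (ht0 : ∀ j, 0 ≤ t j)
    (hs0 : s0 ≤ 2 ^ (l.choose 2) * (n : ℝ) ^ l)
    (ht : ∀ j ∈ Finset.Icc 1 l,
      t j ≤ 2 ^ ((l - j).choose 2) * (n : ℝ) ^ (l - j) * ((l + n + 1).choose j)) :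
    2 * s0 + ∑ j ∈ Finset.Icc 1 l, ((l : ℝ) + 1 - j) * t j ≤
      (l : ℝ) * ((Real.exp 2 + 3) / 2) * 2 ^ (l.choose 2) * (n : ℝ) ^ l :=
  fewnomial_path_bound_general l n hl hn s0 t hs0 ht
end

section
/- Suppose x ∈ (ℂ^×)ⁿ satisfies x^{α_i} = p_i(x^{α_{n+1}}, …, x^{α_{l+n}}) for i = 1,…,n, where each p_i is an affine function, and β ∈ ℤ^{l+n} is a linear relation among α₁,…,α_{l+n}. Setting y_i = x^{α_{n+i}} for i = 1,…,l and p_{n+i}(y) = y_i, the point y satisfies the master-function equation p₁(y)^{β₁} ⋯ p_{l+n}(y)^{β_{l+n}} = 1, provided all p_i(y) ≠ 0. -/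
/-! The relation `∑ β_j α_j = 0` says exactly that the Laurent monomials `x^{α_j}` satisfy
`∏ (x^{α_j})^{β_j} = x^{∑ β_j α_j} = 1`. The diagonal system identifies `x^{α_i}` with `p_i(y)` for
`i ≤ n`, and `y_j = x^{α_{n+j}}` by definition, so `∏ p_j(y)^{β_j}` is that product of monomials. -/

open Finset

namespace LaurentMonomial

variable {ι G : Type*} [Fintype ι] [CommGroupWithZero G]

def eval (x : ι → G) (a : ι → ℤ) : G :=
  ∏ k, x k ^ a k

@[simp]
lemma eval_zero (x : ι → G) : eval x 0 = 1 := by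
  simp [eval]

lemma eval_add {x : ι → G} (hx : ∀ k, x k ≠ 0) (a b : ι → ℤ) :
    eval x (a + b) = eval x a * eval x b := by
  simp only [eval, Pi.add_apply, zpow_add₀ (hx _), prod_mul_distrib]

lemma eval_zsmul (x : ι → G) (m : ℤ) (a : ι → ℤ) : eval x (m • a) = eval x a ^ m := by
  simp only [eval, Pi.smul_apply, smul_eq_mul, mul_comm m, zpow_mul, prod_zpow]

lemma eval_sum {κ : Type*} {x : ι → G} (hx : ∀ k, x k ≠ 0) (s : Finset κ) (a : κ → ι → ℤ) :
    eval x (∑ j ∈ s, a j) = ∏ j ∈ s, eval x (a j) := by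
  induction s using Finset.cons_induction with
  | empty => simp
  | cons j s hj ih => rw [sum_cons, prod_cons, eval_add hx, ih]

lemma prod_eval_zpow_eq_one_of_sum_zsmul_eq_zero {κ : Type*} [Fintype κ] {x : ι → G}
    (hx : ∀ k, x k ≠ 0) {α : κ → ι → ℤ} {β : κ → ℤ} (hrel : ∑ j, β j • α j = 0) :
    ∏ j, eval x (α j) ^ β j = 1 := by
  simp_rw [← eval_zsmul, ← eval_sum hx, hrel, eval_zero]

end LaurentMonomial

theorem gale_dual_master_function_general (n l : ℕ)
    (α : Fin (n + l) → Fin n → ℤ) (β : Fin (n + l) → ℤ)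
    (hrel : ∑ j, β j • α j = 0)
    (p : Fin n → (Fin l → ℂ) → ℂ)
    (x : Fin n → ℂ) (hx : ∀ k, x k ≠ 0)
    (hdiag : ∀ i : Fin n, (∏ k, x k ^ α (Fin.castAdd l i) k) =
      p i (fun j => ∏ k, x k ^ α (Fin.natAdd n j) k)) :
    let y : Fin l → ℂ := fun j => ∏ k, x k ^ α (Fin.natAdd n j) k
    let P : Fin (n + l) → ℂ :=
      Fin.addCases (fun i => p i y) (fun j => y j)
    (∀ j, P j ≠ 0) → ∏ j, P j ^ β j = 1 := by
  intro y P _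
  have hP : P = fun j => LaurentMonomial.eval x (α j) := by
    funext j
    induction j using Fin.addCases with
    | left i => exact (Fin.addCases_left i).trans (hdiag i).symm
    | right j => exact Fin.addCases_right j
  rw [hP]
  exact LaurentMonomial.prod_eval_zpow_eq_one_of_sum_zsmul_eq_zero hx hrel

/-- If `x ∈ (ℂ^×)ⁿ` satisfies the diagonal system
`x^{α_i} = p_i(x^{α_{n+1}},…,x^{α_{l+n}})` with each `p_i` affine, and `β` is
an integer linear relation among the `α_j`, then setting `y_i = x^{α_{n+i}}`
and `p_{n+i}(y) = y_i`, the point `y` satisfies the master-function equation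
`p₁(y)^{β₁} ⋯ p_{l+n}(y)^{β_{l+n}} = 1` provided all `p_i(y) ≠ 0`. -/
theorem gale_dual_master_function (n l : ℕ)
    (α : Fin (n + l) → Fin n → ℤ) (β : Fin (n + l) → ℤ)
    (hrel : ∑ j, β j • α j = 0)
    (p : Fin n → (Fin l → ℂ) → ℂ) (c : Fin n → ℂ) (A : Fin n → Fin l → ℂ)
    (hp : ∀ i y, p i y = c i + ∑ j, A i j * y j)
    (x : Fin n → ℂ) (hx : ∀ k, x k ≠ 0)
    (hdiag : ∀ i : Fin n, (∏ k, x k ^ α (Fin.castAdd l i) k) =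
      p i (fun j => ∏ k, x k ^ α (Fin.natAdd n j) k)) :
    let y : Fin l → ℂ := fun j => ∏ k, x k ^ α (Fin.natAdd n j) k
    let P : Fin (n + l) → ℂ :=
      Fin.addCases (fun i => p i y) (fun j => y j)
    (∀ j, P j ≠ 0) → ∏ j, P j ^ β j = 1 :=
  gale_dual_master_function_general n l α β hrel p x hx hdiag
end
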